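/- In the rank-22 lattice Pic' (Example 2), the classes α1 = 3H1−E1−E2−E3−E4−E5−E6, α2 = 3H0−E7−E8−E9−E10−E11−E12, α3 = 3H0+3H1−3E13−3E14−E15−E16−E17−E18−E19−E20 satisfy α1·α1 = α2·α2 = α3·α3 = −6 and αi·αj = 9 for i ≠ j; consequently the generalized Cartan matrix c_{ij} = 2(αi·αj)/(αi·αi) equals [[2,−3,−3],[−3,2,−3],[−3,−3,2]], which is of neither finite, affine, nor hyperbolic type. -/

import Mathlib

/-- The Picard lattice of Example 2: the free ℤ-module of rank 22 with basis
`H0, H1, E1, …, E20`. -/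
abbrev Pic' : Type := Fin 22 → ℤ

/-- The class `H0`. -/
def H0 : Pic' := Pi.single 0 1

/-- The class `H1`. -/
def H1 : Pic' := Pi.single 1 1

/-- The exceptional classes: `E k` is the paper's `E_{k+1}` for `k : Fin 20`. -/
def E (k : Fin 20) : Pic' := Pi.single k.succ.succ 1

/-- The intersection form: `H0·H1 = 1`, `H0·H0 = H1·H1 = 0`, `Ek·El = -δ`, `Hi·Ek = 0`. -/
def ip (u v : Pic') : ℤ :=
  u 0 * v 1 + u 1 * v 0 - ∑ k : Fin 20, u k.succ.succ * v k.succ.succ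

/-- The root basis `α1, α2, α3` of Example 2. -/
def α : Fin 3 → Pic' :=
  ![(3 : ℤ) • H1 - E 0 - E 1 - E 2 - E 3 - E 4 - E 5,
    (3 : ℤ) • H0 - E 6 - E 7 - E 8 - E 9 - E 10 - E 11,
    (3 : ℤ) • H0 + (3 : ℤ) • H1 - (3 : ℤ) • E 12 - (3 : ℤ) • E 13
      - E 14 - E 15 - E 16 - E 17 - E 18 - E 19]

/-- A symmetric generalized Cartan matrix is of finite type iff it is positive
definite. -/
def IsFiniteType {n : ℕ} (A : Matrix (Fin n) (Fin n) ℝ) : Prop := A.PosDef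

/-- A symmetric generalized Cartan matrix is of affine type iff it is positive
semidefinite but not positive definite. -/
def IsAffineType {n : ℕ} (A : Matrix (Fin n) (Fin n) ℝ) : Prop :=
  A.PosSemidef ∧ ¬ A.PosDef

/-- A symmetric `3 × 3` generalized Cartan matrix is of hyperbolic type iff it is not
positive semidefinite (indefinite type) while every proper principal submatrix is
positive semidefinite (i.e. of finite or affine type). -/
def IsHyperbolicType (A : Matrix (Fin 3) (Fin 3) ℝ) : Prop :=
  ¬ A.PosSemidef ∧ ∀ i : Fin 3, (A.submatrix i.succAbove i.succAbove).PosSemidef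

/-- In Example 2 one has `αi·αi = -6`, `αi·αj = 9` for `i ≠ j`, the generalized Cartan
matrix `2(αi·αj)/(αi·αi)` equals `[[2,-3,-3],[-3,2,-3],[-3,-3,2]]`, and this matrix is
of neither finite, affine, nor hyperbolic type. -/
theorem example2_cartanMatrix :
    (∀ i : Fin 3, ip (α i) (α i) = -6) ∧
    (∀ i j : Fin 3, i ≠ j → ip (α i) (α j) = 9) ∧
    (Matrix.of fun i j : Fin 3 => 2 * ip (α i) (α j) / ip (α i) (α i))
      = !![2, -3, -3; -3, 2, -3; -3, -3, 2] ∧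
    (¬ IsFiniteType ((!![2, -3, -3; -3, 2, -3; -3, -3, 2] : Matrix (Fin 3) (Fin 3) ℤ).map
        (Int.cast : ℤ → ℝ)) ∧
     ¬ IsAffineType ((!![2, -3, -3; -3, 2, -3; -3, -3, 2] : Matrix (Fin 3) (Fin 3) ℤ).map
        (Int.cast : ℤ → ℝ)) ∧
     ¬ IsHyperbolicType ((!![2, -3, -3; -3, 2, -3; -3, -3, 2] : Matrix (Fin 3) (Fin 3) ℤ).map
        (Int.cast : ℤ → ℝ))) := by
  have key : ∀ i j : Fin 3, ip (α i) (α j) = if i = j then -6 else 9 := by decide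
  have hnotPSD :
      ¬ ((!![2, -3, -3; -3, 2, -3; -3, -3, 2] : Matrix (Fin 3) (Fin 3) ℤ).map
        (Int.cast : ℤ → ℝ)).PosSemidef := by
    intro h
    have := h.dotProduct_mulVec_nonneg ![1, 1, 0]
    simp [Matrix.mulVec, dotProduct, Fin.sum_univ_succ, Matrix.map_apply] at this
    norm_num at this
  refine ⟨fun i => by simp [key], fun i j hij => by simp [key, hij], ?_, ?_, ?_, ?_⟩
  · ext i j
    fin_cases i <;> fin_cases j <;> simp [key] <;> decide
  · exact fun h => hnotPSD h.posSemidef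
  · exact fun h => hnotPSD h.1
  · intro h
    have := (h.2 0).dotProduct_mulVec_nonneg ![1, 1]
    simp [Matrix.mulVec, dotProduct, Fin.sum_univ_succ, Matrix.map_apply,
      Matrix.submatrix_apply, Fin.succAbove] at this
    norm_num at this
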